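/- For the function J(k) = k + 1/k on (0, ∞), for every sublevel set {k > 0 : J(k) ≤ ν} with ν > 2, there exists μ > 0 such that μ(J(k) − 2) ≤ (1/2)(1 − 1/k²)² for all k in the sublevel set. -/

import Mathlib

/-! Since `k + 1/k - 2 = (k - 1)² / k` and `(1 - 1/k²)² = (k - 1)² (k + 1)² / k⁴`, the inequality
reduces to `μ ≤ (k + 1)² / (2 k³)`. The right side is at least `1 / (2 k)`, and `k ≤ ν` on the
sublevel set, so `μ = 1 / (2 ν)` works. -/

lemma add_one_div_sub_two_eq {k : ℝ} (hk : k ≠ 0) : k + 1 / k - 2 = (k - 1) ^ 2 / k := by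
  field_simp
  ring

lemma one_sub_one_div_sq_sq_eq {k : ℝ} (hk : k ≠ 0) :
    (1 - 1 / k ^ 2) ^ 2 = (k - 1) ^ 2 * (k + 1) ^ 2 / k ^ 4 := by
  field_simp
  ring

lemma le_of_add_one_div_le {k ν : ℝ} (hk : 0 < k) (h : k + 1 / k ≤ ν) : k ≤ ν := by
  have : 0 < 1 / k := by positivity
  linarith

lemma one_div_two_mul_add_one_div_sub_two_le {k ν : ℝ} (hk : 0 < k) (hkν : k ≤ ν) :
    1 / (2 * ν) * (k + 1 / k - 2) ≤ 1 / 2 * (1 - 1 / k ^ 2) ^ 2 := by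
  rw [add_one_div_sub_two_eq hk.ne', one_sub_one_div_sq_sq_eq hk.ne']
  calc 1 / (2 * ν) * ((k - 1) ^ 2 / k)
      ≤ 1 / (2 * k) * ((k - 1) ^ 2 / k) := by gcongr
    _ = 1 / 2 * ((k - 1) ^ 2 * k ^ 2 / k ^ 4) := by field_simp
    _ ≤ 1 / 2 * ((k - 1) ^ 2 * (k + 1) ^ 2 / k ^ 4) := by gcongr; linarith

/-- Sublevel-set gradient dominance of the scalar LQR cost `J(k) = k + 1/k` on
`(0,∞)` (minimum value `2`, derivative `1 − 1/k²`): for every `ν > 2` there is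
`μ > 0` with `μ(J(k) − 2) ≤ ½(1 − 1/k²)²` on the sublevel set `{k > 0 : J(k) ≤ ν}`. -/
theorem scalar_lqr_sublevel_gradient_dominance :
    ∀ ν : ℝ, 2 < ν → ∃ μ : ℝ, 0 < μ ∧
      ∀ k : ℝ, 0 < k → k + 1 / k ≤ ν →
        μ * ((k + 1 / k) - 2) ≤ 1 / 2 * (1 - 1 / k ^ 2) ^ 2 := by
  intro ν hν
  refine ⟨1 / (2 * ν), by positivity, fun k hk hkν => ?_⟩
  exact one_div_two_mul_add_one_div_sub_two_le hk (le_of_add_one_div_le hk hkν)
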